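/- Let T be a right generalized inverse ∗-semigroup, S an inverse semigroup, and θ : T → S an étale homomorphism. Then the map α : T → {(s, e) ∈ S × E(T) : s⁻¹·s = θ(e)} defined by α(t) = (θ(t), t∗·t) is well defined (i.e. θ(t)⁻¹·θ(t) = θ(t∗·t) and t∗·t is idempotent) and is a bijection, and the composition of α with the projection (s,e) ↦ s equals θ. -/

import Mathlib

/-!
A multiplicative map sends `t∗` to an inverse of `θ t`, which in an inverse semigroup is the
inverse; hence `θ(t∗t) = θ(t)⁻¹θ(t)`. Since `t ∈ T·(t∗t)`, the pair `(θ t, t∗t)` pins `t` down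
by injectivity of `θ` on `T·(t∗t)`. Conversely, given `s⁻¹s = θ e`, lift `s ∈ S·θ(e)` to
`a ∈ T·e`; both `a∗a` and `e` lie in `T·e` and have image `s⁻¹s`, so `a∗a = e`.
-/

/-- `t` is a (von Neumann) inverse of `s`. -/
def IsInvOf {S : Type*} [Semigroup S] (t s : S) : Prop :=
  s * t * s = s ∧ t * s * t = t

/-- `e` is an idempotent. -/
def IsIdem {S : Type*} [Semigroup S] (e : S) : Prop := e * e = e

/-- A right generalized inverse semigroup: every element is regular, the product of
idempotents is idempotent, and idempotents satisfy the right normality law `e*f*g = f*e*g`. -/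
structure IsRGIS (S : Type*) [Semigroup S] : Prop where
  regular : ∀ s : S, ∃ t, IsInvOf t s
  idem_mul : ∀ e f : S, IsIdem e → IsIdem f → IsIdem (e * f)
  right_normal : ∀ e f g : S, IsIdem e → IsIdem f → IsIdem g → e * f * g = f * e * g

/-- A right ∗-semigroup structure: axioms (S1)-(S4). -/
structure IsRightStar (S : Type*) [Semigroup S] (star : S → S) : Prop where
  s1 : ∀ s : S, star (star s) = s
  s2 : ∀ s : S, IsInvOf (star s) s
  s3 : ∀ s t : S, star (s * t) = star t * star (s * t * star t)
  s4 : ∀ e : S, IsIdem e → star e = e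

/-- An inverse semigroup: `inv s` is an inverse of `s`, and inverses are unique. -/
structure IsInverseSemigroup (S : Type*) [Semigroup S] (inv : S → S) : Prop where
  inv_spec : ∀ s : S, IsInvOf (inv s) s
  inv_unique : ∀ s t : S, IsInvOf t s → t = inv s

/-- The relation γ : `a γ b` iff `V(a) ∩ V(b) ≠ ∅`. -/
def GammaRel {S : Type*} [Semigroup S] (a b : S) : Prop :=
  ∃ t, IsInvOf t a ∧ IsInvOf t b

/-- The natural partial order on a regular semigroup. -/
def NatLe {S : Type*} [Semigroup S] (a b : S) : Prop :=
  ∃ e f : S, IsIdem e ∧ IsIdem f ∧ a = e * b ∧ a = b * f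

/-- Green's L relation. -/
def GreenL {S : Type*} [Semigroup S] (a b : S) : Prop :=
  a = b ∨ ∃ x y : S, a = x * b ∧ b = y * a

/-- An étale homomorphism: for every idempotent `e` of `T`, `θ` restricts to a bijection
from `T·e` onto `S·θ(e)`. -/
def IsEtaleHom {T S : Type*} [Semigroup T] [Semigroup S] (θ : T → S) : Prop :=
  ∀ e : T, IsIdem e →
    (∀ a b : T, a * e = a → b * e = b → θ a = θ b → a = b) ∧
    (∀ s : S, s * θ e = s → ∃ a : T, a * e = a ∧ θ a = s)

section

variable {S : Type*} [Semigroup S]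

theorem IsInvOf.mul_mul_self {t s : S} (h : IsInvOf t s) : s * (t * s) = s := by
  rw [← mul_assoc, h.1]

theorem IsInvOf.isIdem_mul {t s : S} (h : IsInvOf t s) : IsIdem (t * s) := by
  show t * s * (t * s) = t * s
  rw [mul_assoc, h.mul_mul_self]

theorem IsInvOf.map {T : Type*} [Semigroup T] {θ : S → T}
    (hhom : ∀ a b : S, θ (a * b) = θ a * θ b) {t s : S} (h : IsInvOf t s) :
    IsInvOf (θ t) (θ s) := by
  constructor <;> rw [← hhom, ← hhom]
  exacts [congrArg θ h.1, congrArg θ h.2]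

theorem IsRightStar.mul_star_mul_self {star : S → S} (hstar : IsRightStar S star) (t : S) :
    t * (star t * t) = t :=
  (hstar.s2 t).mul_mul_self

end

theorem IsInverseSemigroup.inv_map_mul_map {T S : Type*} [Semigroup T] [Semigroup S]
    {star : T → T} (hstar : IsRightStar T star) {inv : S → S} (hS : IsInverseSemigroup S inv)
    {θ : T → S} (hhom : ∀ a b : T, θ (a * b) = θ a * θ b) (t : T) :
    inv (θ t) * θ t = θ (star t * t) := by
  rw [hhom, hS.inv_unique _ _ ((hstar.s2 t).map hhom)]

theorem IsEtaleHom.eq_of_map_eq {T S : Type*} [Semigroup T] [Semigroup S] {θ : T → S}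
    (het : IsEtaleHom θ) {e a b : T} (he : IsIdem e) (ha : a * e = a) (hb : b * e = b)
    (hab : θ a = θ b) : a = b :=
  (het e he).1 a b ha hb hab

theorem IsEtaleHom.exists_lift {T S : Type*} [Semigroup T] [Semigroup S] {θ : T → S}
    (het : IsEtaleHom θ) {e : T} (he : IsIdem e) {s : S} (hs : s * θ e = s) :
    ∃ a : T, a * e = a ∧ θ a = s :=
  (het e he).2 s hs

theorem etale_coordinates_bijection_general {T S : Type*} [Semigroup T] [Semigroup S]
    (star : T → T) (hstar : IsRightStar T star)
    (inv : S → S) (hS : IsInverseSemigroup S inv)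
    (θ : T → S) (hhom : ∀ a b : T, θ (a * b) = θ a * θ b)
    (het : IsEtaleHom θ) :
    (∀ t : T, inv (θ t) * θ t = θ (star t * t) ∧ IsIdem (star t * t)) ∧
    (∀ t₁ t₂ : T, θ t₁ = θ t₂ → star t₁ * t₁ = star t₂ * t₂ → t₁ = t₂) ∧
    (∀ (s : S) (e : T), IsIdem e → inv s * s = θ e →
      ∃ t : T, θ t = s ∧ star t * t = e) ∧
    (∀ t : T, ((θ t, star t * t) : S × T).1 = θ t) := by
  have hsource := hS.inv_map_mul_map hstar hhom
  refine ⟨fun t => ⟨hsource t, (hstar.s2 t).isIdem_mul⟩, ?_, ?_, fun t => rfl⟩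
  · intro t₁ t₂ hθ hstar_eq
    refine het.eq_of_map_eq (hstar.s2 t₁).isIdem_mul (hstar.mul_star_mul_self t₁) ?_ hθ
    rw [hstar_eq, hstar.mul_star_mul_self]
  · intro s e he hse
    have hs : s * θ e = s := by rw [← hse, (hS.inv_spec s).mul_mul_self]
    obtain ⟨a, hae, rfl⟩ := het.exists_lift he hs
    refine ⟨a, rfl, het.eq_of_map_eq he ?_ he ?_⟩
    · rw [mul_assoc, hae]
    · rw [← hsource, hse]

/-- Proposition 2.7(2): the map `α(t) = (θ(t), t∗·t)` into
`{(s,e) ∈ S × E(T) : s⁻¹·s = θ(e)}` is well defined and bijective, and composing it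
with the projection `(s,e) ↦ s` gives back `θ`. -/
theorem etale_coordinates_bijection {T S : Type*} [Semigroup T] [Semigroup S]
    (hT : IsRGIS T) (star : T → T) (hstar : IsRightStar T star)
    (inv : S → S) (hS : IsInverseSemigroup S inv)
    (θ : T → S) (hhom : ∀ a b : T, θ (a * b) = θ a * θ b)
    (het : IsEtaleHom θ) :
    (∀ t : T, inv (θ t) * θ t = θ (star t * t) ∧ IsIdem (star t * t)) ∧
    (∀ t₁ t₂ : T, θ t₁ = θ t₂ → star t₁ * t₁ = star t₂ * t₂ → t₁ = t₂) ∧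
    (∀ (s : S) (e : T), IsIdem e → inv s * s = θ e →
      ∃ t : T, θ t = s ∧ star t * t = e) ∧
    (∀ t : T, ((θ t, star t * t) : S × T).1 = θ t) :=
  etale_coordinates_bijection_general star hstar inv hS θ hhom het
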